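/- arXiv:1603.03543 — 7 statements merged into one kernel-verified Lean document; each statement's English description precedes it below -/
import Mathlib

section
/- If a subset S of V with |S| ≥ 2 is group-stable with respect to a preference profile Π, then S is self-approving with respect to Π. -/
open Finset

variable {α : Type*} [DecidableEq α]

/-- `GroupPrefers r A B`: under ranking `r` (smaller rank = more preferred), the set `A`
is group-preferred to `B`: there is an injection `f` from `B` into `A` such that each
`f b` is strictly preferred to `b`.  (When `|A| = |B|` this is a bijection.) -/
def GroupPrefers (r : α → ℕ) (A B : Finset α) : Prop :=
  ∃ f : α → α, Set.InjOn f ↑B ∧ (∀ b ∈ B, f b ∈ A) ∧ ∀ b ∈ B, r (f b) < r b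

/-- The top-`k` elements of `A` under the ranking `r`. -/
def topk (r : α → ℕ) (k : ℕ) (A : Finset α) : Finset α :=
  A.filter fun a => (A.filter fun b => r b < r a).card < k

/-- `WeakPrefers r A B`: `r` weakly prefers `A` to `B`, i.e. with `k = min(|A|,|B|)`,
the top-`k` elements of `A` are group-preferred to the top-`k` elements of `B`
(and `A` is nonempty whenever `B` is). -/
def WeakPrefers (r : α → ℕ) (A B : Finset α) : Prop :=
  (B.Nonempty → A.Nonempty) ∧
  GroupPrefers r (topk r (min A.card B.card) A) (topk r (min A.card B.card) B)

/-- `P` is a preference profile on `V`: each individual's ranking is a total (strict)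
order on `V`, i.e. injective on `V`. -/
def IsProfile (V : Finset α) (P : α → α → ℕ) : Prop :=
  ∀ u ∈ V, Set.InjOn (P u) ↑V

/-- `S` is self-approving w.r.t. the profile `P` on `V`. -/
def SelfApproving (V : Finset α) (P : α → α → ℕ) (S : Finset α) : Prop :=
  ∀ S' ⊆ V \ S, S'.card = S.card → ∃ s ∈ S, ¬ GroupPrefers (P s) S' S

/-- `S` is group-stable w.r.t. the profile `P` on `V`. -/
def GroupStable (V : Finset α) (P : α → α → ℕ) (S : Finset α) : Prop :=
  ∀ G, G ⊂ S → G.Nonempty → ∀ G' ⊆ V \ S, G'.card = G.card →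
    ∃ s ∈ S \ G, ¬ GroupPrefers (P s) G' G

/-- `S` is strongly group-stable w.r.t. the profile `P` on `V`. -/
def StronglyGroupStable (V : Finset α) (P : α → α → ℕ) (S : Finset α) : Prop :=
  ∀ G, G ⊂ S → G.Nonempty → ∃ s ∈ S \ G, ¬ WeakPrefers (P s) (V \ S) G

/-- `s` ranks itself first (π_s(s) = 1). -/
def RanksSelfFirst (V : Finset α) (P : α → α → ℕ) (s : α) : Prop :=
  ∀ v ∈ V, v ≠ s → P s s < P s v

/-- Membership in `C_scomp`: strongly group-stable, and a singleton `{s}` must rank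
itself first. -/
def CscompMem (V : Finset α) (P : α → α → ℕ) (S : Finset α) : Prop :=
  S ⊆ V ∧ StronglyGroupStable V P S ∧ ∀ s, S = {s} → RanksSelfFirst V P s

/-- A (nonempty) clique of a preference network: every member prefers every member
to every non-member. -/
def IsClique (V : Finset α) (P : α → α → ℕ) (S : Finset α) : Prop :=
  S.Nonempty ∧ S ⊆ V ∧ ∀ u ∈ S, ∀ v ∈ S, ∀ w ∈ V \ S, P u v < P u w

/-- A community function maps each preference network `(V, P)` to a collection of
subsets of `V`. -/
abbrev CommunityFun (α : Type*) := Finset α → (α → α → ℕ) → Set (Finset α)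

/-- Axiom GS: every (nonempty) community is group-stable. -/
def SatisfiesGS (C : CommunityFun α) : Prop :=
  ∀ (V : Finset α) (P : α → α → ℕ), IsProfile V P →
    ∀ S ∈ C V P, S ⊆ V → S.Nonempty → GroupStable V P S

/-- Axiom SGS: every (nonempty) community is strongly group-stable. -/
def SatisfiesSGS (C : CommunityFun α) : Prop :=
  ∀ (V : Finset α) (P : α → α → ℕ), IsProfile V P →
    ∀ S ∈ C V P, S ⊆ V → S.Nonempty → StronglyGroupStable V P S

/-- Axiom SA: every (nonempty) community is self-approving. -/
def SatisfiesSA (C : CommunityFun α) : Prop :=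
  ∀ (V : Finset α) (P : α → α → ℕ), IsProfile V P →
    ∀ S ∈ C V P, S ⊆ V → S.Nonempty → SelfApproving V P S

/-- Axiom SA': every singleton community ranks itself first. -/
def SatisfiesSA' (C : CommunityFun α) : Prop :=
  ∀ (V : Finset α) (P : α → α → ℕ), IsProfile V P →
    ∀ s ∈ V, {s} ∈ C V P → RanksSelfFirst V P s

/-- Axiom Mon (monotonicity). -/
def SatisfiesMon (C : CommunityFun α) : Prop :=
  ∀ (V : Finset α) (P P' : α → α → ℕ), IsProfile V P → IsProfile V P' →
    ∀ S ⊆ V, (∀ s ∈ S, ∀ u ∈ S, ∀ v ∈ V, P s u < P s v → P' s u < P' s v) →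
      S ∈ C V P → S ∈ C V P'

/-- Axiom WC (world community). -/
def SatisfiesWC (C : CommunityFun α) : Prop :=
  ∀ (V : Finset α) (P : α → α → ℕ), IsProfile V P → V ∈ C V P

/-- Axiom A (anonymity). -/
def SatisfiesA (C : CommunityFun α) : Prop :=
  ∀ (V : Finset α) (P P' : α → α → ℕ) (σ : α ≃ α), IsProfile V P → IsProfile V P' →
    (∀ v ∈ V, σ v ∈ V) → (∀ u ∈ V, ∀ v ∈ V, P' (σ u) (σ v) = P u v) →
    ∀ S ⊆ V, (S ∈ C V P ↔ S.image σ ∈ C V P')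

/-- Axiom Emb (embedding). -/
def SatisfiesEmb (C : CommunityFun α) : Prop :=
  ∀ (V V' : Finset α) (P P' : α → α → ℕ), IsProfile V P → IsProfile V' P' → V' ⊆ V →
    (∀ u ∈ V', ∀ v ∈ V', ∀ w ∈ V', (P' u v < P' u w ↔ P u v < P u w)) →
    C V' P' = C V P ∩ {S : Finset α | S ⊆ V'}

/-- a group-stable set of size at least 2 is self-approving. -/
theorem stmt0 (V S : Finset α) (P : α → α → ℕ) (hP : IsProfile V P)
    (hSV : S ⊆ V) (h2 : 2 ≤ S.card) (hGS : GroupStable V P S) :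
    SelfApproving V P S := by
  intro S' hS' hcard
  by_contra h
  push_neg at h
  obtain ⟨s₀, hs₀⟩ := Finset.card_pos.mp (by omega : 0 < S.card)
  obtain ⟨f, hinj, hmem, hlt⟩ := h s₀ hs₀
  set G : Finset α := S.erase s₀ with hG
  have hGss : G ⊂ S := Finset.erase_ssubset hs₀
  have hGne : G.Nonempty := by
    rw [← Finset.card_pos, Finset.card_erase_of_mem hs₀]; omega
  set G' : Finset α := G.image f with hG'
  have hinjG : Set.InjOn f ↑G := hinj.mono (by
    simpa using (Finset.coe_subset.mpr hGss.subset))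
  have hG'sub : G' ⊆ V \ S := fun x hx => by
    obtain ⟨b, hb, rfl⟩ := Finset.mem_image.mp hx
    exact hS' (hmem b (hGss.subset hb))
  have hG'card : G'.card = G.card := Finset.card_image_of_injOn hinjG
  obtain ⟨s, hsmem, hnp⟩ := hGS G hGss hGne G' hG'sub hG'card
  have hs : s = s₀ := by
    rcases Finset.mem_sdiff.mp hsmem with ⟨hsS, hsG⟩
    by_contra hne
    exact hsG (Finset.mem_erase.mpr ⟨hne, hsS⟩)
  subst hs
  exact hnp ⟨f, hinjG, fun b hb => Finset.mem_image_of_mem f hb,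
    fun b hb => hlt b (hGss.subset hb)⟩
end

section
/- If π weakly prefers S' to S, and S' ⊆ U ⊆ V with |S'| ≥ |S|, then π weakly prefers U to S. -/
open Finset

variable {α : Type*} [DecidableEq α]

lemma topk_subset (r : α → ℕ) (k : ℕ) (A : Finset α) : topk r k A ⊆ A :=
  filter_subset _ _

lemma card_topk (r : α → ℕ) (k : ℕ) (A : Finset α) (h : Set.InjOn r ↑A) :
    (topk r k A).card = min k A.card := by
  set pos : α → ℕ := fun a => (A.filter fun b => r b < r a).card with hpos
  have hmono : ∀ a ∈ A, ∀ b ∈ A, r a < r b →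
      (A.filter fun c => r c < r a) ⊂ (A.filter fun c => r c < r b) := by
    intro a ha b hb hab
    constructor
    · intro c hc
      simp only [mem_filter] at hc ⊢
      exact ⟨hc.1, hc.2.trans hab⟩
    · intro hsub
      have := hsub (mem_filter.2 ⟨ha, hab⟩)
      simp only [mem_filter] at this
      exact lt_irrefl _ this.2
  have hinj : Set.InjOn pos ↑A := by
    intro a ha b hb hab
    by_contra hne
    rcases lt_trichotomy (r a) (r b) with hlt | heq | hgt
    · exact absurd hab (Nat.ne_of_lt (card_lt_card (hmono a ha b hb hlt)))
    · exact hne (h ha hb heq)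
    · exact absurd hab.symm (Nat.ne_of_lt (card_lt_card (hmono b hb a ha hgt)))
  have hbound : ∀ a ∈ A, pos a < A.card := by
    intro a ha
    apply card_lt_card
    constructor
    · exact filter_subset _ _
    · intro hsub
      have := hsub ha
      simp only [mem_filter] at this
      exact lt_irrefl _ this.2
  have himg : A.image pos = range A.card := by
    apply eq_of_subset_of_card_le
    · intro x hx
      simp only [mem_image] at hx
      obtain ⟨a, ha, rfl⟩ := hx
      exact mem_range.2 (hbound a ha)
    · rw [card_range, card_image_of_injOn hinj]
  have key : topk r k A = A.filter fun a => pos a < k := rfl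
  calc (topk r k A).card
      = ((A.filter fun a => pos a < k).image pos).card := by
        rw [card_image_of_injOn (hinj.mono (by exact_mod_cast filter_subset _ _))]
        rw [key]
    _ = ((A.image pos).filter fun x => x < k).card := by
        congr 1
        exact (filter_image (f := pos) (s := A) (p := fun x => x < k)).symm
    _ = min k A.card := by
        rw [himg]
        have : (range A.card).filter (fun x => x < k) = range (min k A.card) := by
          ext x; simp only [mem_filter, mem_range, lt_min_iff]; tauto
        rw [this, card_range]

lemma topk_lt (r : α → ℕ) (k : ℕ) (A : Finset α) (h : Set.InjOn r ↑A) {a t : α}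
    (ha : a ∈ A) (hna : a ∉ topk r k A) (ht : t ∈ topk r k A) : r t < r a := by
  simp only [topk, mem_filter, not_and, not_lt] at hna ht
  have hk : k ≤ (A.filter fun b => r b < r a).card := hna ha
  by_contra hle
  push_neg at hle
  rcases eq_or_lt_of_le hle with heq | hlt
  · have : a = t := h ha ht.1 heq
    subst this
    exact absurd ht.2 (not_lt.2 hk)
  · have hsub : (A.filter fun b => r b < r a) ⊆ (A.filter fun b => r b < r t) := by
      intro c hc
      simp only [mem_filter] at hc ⊢
      exact ⟨hc.1, hc.2.trans hlt⟩
    exact absurd ht.2 (not_lt.2 (hk.trans (card_le_card hsub)))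

/-- if `π` weakly prefers `S'` to `S`, `S' ⊆ U ⊆ V` and `|S'| ≥ |S|`,
then `π` weakly prefers `U` to `S`. -/
theorem stmt1 (V S S' U : Finset α) (r : α → ℕ) (hr : Set.InjOn r ↑V)
    (hS : S ⊆ V) (hU : U ⊆ V) (hS'U : S' ⊆ U) (hcard : S.card ≤ S'.card)
    (h : WeakPrefers r S' S) : WeakPrefers r U S := by
  have hS'V : S' ⊆ V := hS'U.trans hU
  have hUc : S.card ≤ U.card := hcard.trans (card_le_card hS'U)
  have hmin1 : min S'.card S.card = S.card := min_eq_right hcard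
  have hmin2 : min U.card S.card = S.card := min_eq_right hUc
  have h2 := h.2
  rw [hmin1] at h2
  obtain ⟨f, hfinj, hfmem, hflt⟩ := h2
  set k := S.card with hk
  set A' := topk r k S' with hA'
  set T := topk r k U with hT
  have hrS' : Set.InjOn r ↑S' := hr.mono (by exact_mod_cast hS'V)
  have hrU : Set.InjOn r ↑U := hr.mono (by exact_mod_cast hU)
  have hcA' : A'.card = k := by
    rw [hA', card_topk r k S' hrS', min_eq_left hcard]
  have hcT : T.card = k := by
    rw [hT, card_topk r k U hrU, min_eq_left hUc]
  have hdiff : (A' \ T).card = (T \ A').card := by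
    have h1 : (A' \ T).card + (A' ∩ T).card = A'.card := card_sdiff_add_card_inter A' T
    have h2 : (T \ A').card + (T ∩ A').card = T.card := card_sdiff_add_card_inter T A'
    rw [inter_comm] at h2
    omega
  have e := equivOfCardEq hdiff
  set g : α → α := fun a => if ha : a ∈ A' \ T then (e ⟨a, ha⟩ : α) else a with hg
  have hgeqn : ∀ {a : α}, a ∉ A' \ T → g a = a := fun h => dif_neg h
  have hgeqp : ∀ {a : α} (h : a ∈ A' \ T), g a = (e ⟨a, h⟩ : α) := fun h => dif_pos h
  have hgmem : ∀ a ∈ A', g a ∈ T := by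
    intro a ha
    by_cases haT : a ∈ T
    · have : a ∉ A' \ T := by simp [haT]
      rw [hgeqn this]
      exact haT
    · have hmem : a ∈ A' \ T := mem_sdiff.2 ⟨ha, haT⟩
      rw [hgeqp hmem]
      exact (mem_sdiff.1 (e ⟨a, hmem⟩).2).1
  have hgle : ∀ a ∈ A', r (g a) ≤ r a := by
    intro a ha
    by_cases haT : a ∈ T
    · have : a ∉ A' \ T := by simp [haT]
      rw [hgeqn this]
    · have hmem : a ∈ A' \ T := mem_sdiff.2 ⟨ha, haT⟩
      have haU : a ∈ U := hS'U (topk_subset r k S' ha)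
      have := topk_lt r k U hrU haU haT (hgmem a ha)
      exact this.le
  have hgT : ∀ a ∈ A' \ T, g a ∈ T \ A' := by
    intro a ha
    rw [hgeqp ha]
    exact (e ⟨a, ha⟩).2
  have hginj : Set.InjOn g ↑A' := by
    intro a ha b hb hab
    simp only [mem_coe] at ha hb
    by_cases haT : a ∈ T <;> by_cases hbT : b ∈ T
    · have h1 : a ∉ A' \ T := by simp [haT]
      have h2 : b ∉ A' \ T := by simp [hbT]
      rwa [hgeqn h1, hgeqn h2] at hab
    · have h1 : a ∉ A' \ T := by simp [haT]
      have h2 : b ∈ A' \ T := mem_sdiff.2 ⟨hb, hbT⟩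
      rw [hgeqn h1, hgeqp h2] at hab
      have := (mem_sdiff.1 (e ⟨b, h2⟩).2).2
      rw [← hab] at this
      exact absurd ha this
    · have h1 : a ∈ A' \ T := mem_sdiff.2 ⟨ha, haT⟩
      have h2 : b ∉ A' \ T := by simp [hbT]
      rw [hgeqp h1, hgeqn h2] at hab
      have := (mem_sdiff.1 (e ⟨a, h1⟩).2).2
      rw [hab] at this
      exact absurd hb this
    · have h1 : a ∈ A' \ T := mem_sdiff.2 ⟨ha, haT⟩
      have h2 : b ∈ A' \ T := mem_sdiff.2 ⟨hb, hbT⟩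
      rw [hgeqp h1, hgeqp h2] at hab
      have : e ⟨a, h1⟩ = e ⟨b, h2⟩ := Subtype.ext hab
      have := e.injective this
      exact congrArg Subtype.val this
  constructor
  · intro hs
    obtain ⟨x, hx⟩ := h.1 hs
    exact ⟨x, hS'U hx⟩
  · rw [hmin2]
    refine ⟨g ∘ f, ?_, ?_, ?_⟩
    · exact hginj.comp hfinj (fun b hb => hfmem b hb)
    · intro b hb
      exact hgmem _ (hfmem b hb)
    · intro b hb
      exact lt_of_le_of_lt (hgle _ (hfmem b hb)) (hflt b hb)
end

section
/- For any two cliques S₁, S₂ of a preference network, either S₁ ⊆ S₂, or S₂ ⊆ S₁, or S₁ ∩ S₂ = ∅. -/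
open Finset

variable {α : Type*} [DecidableEq α]

theorem IsClique.subset {V S : Finset α} {P : α → α → ℕ} (hS : IsClique V P S) : S ⊆ V :=
  hS.2.1

theorem IsClique.rank_lt {V S : Finset α} {P : α → α → ℕ} (hS : IsClique V P S) {u v w : α}
    (hu : u ∈ S) (hv : v ∈ S) (hw : w ∈ V) (hwS : w ∉ S) : P u v < P u w :=
  hS.2.2 u hu v hv w (mem_sdiff.mpr ⟨hw, hwS⟩)

theorem stmt5_general (V S₁ S₂ : Finset α) (P : α → α → ℕ)
    (h1 : IsClique V P S₁) (h2 : IsClique V P S₂) :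
    S₁ ⊆ S₂ ∨ S₂ ⊆ S₁ ∨ S₁ ∩ S₂ = ∅ := by
  by_contra! h
  obtain ⟨h12, h21, hmeet⟩ := h
  obtain ⟨a, ha₁, ha₂⟩ := not_subset.mp h12
  obtain ⟨b, hb₂, hb₁⟩ := not_subset.mp h21
  obtain ⟨c, hc⟩ := hmeet
  rw [mem_inter] at hc
  exact lt_asymm (h1.rank_lt hc.1 ha₁ (h2.subset hb₂) hb₁) (h2.rank_lt hc.2 hb₂ (h1.subset ha₁) ha₂)

/-- any two cliques are nested or disjoint. -/
theorem stmt5 (V S₁ S₂ : Finset α) (P : α → α → ℕ) (hP : IsProfile V P)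
    (h1 : IsClique V P S₁) (h2 : IsClique V P S₂) :
    S₁ ⊆ S₂ ∨ S₂ ⊆ S₁ ∨ S₁ ∩ S₂ = ∅ :=
  stmt5_general V S₁ S₂ P h1 h2
end

section
/- For every positive integer n there exists a preference network N=(V,Π) with |V|=n such that the number of strongly group-stable subsets S with (|S|>1 or the single member of S ranks itself first) is at least 2^{⌊n/2⌋}. -/
open Finset

variable {α : Type*} [DecidableEq α]

/-- If some member of `G` is ranked by `r` above everything in `V \ S`, then `r` does not
weakly prefer `V \ S` to `G`. -/
lemma not_weakPrefers_aux {V S G : Finset ℕ} (r : ℕ → ℕ) (hG : G.Nonempty)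
    {g0 : ℕ} (hg0 : g0 ∈ G) (h : ∀ w ∈ V \ S, r g0 < r w) :
    ¬ WeakPrefers r (V \ S) G := by
  rintro ⟨hne, f, hinj, hmem, hlt⟩
  rcases (V \ S).eq_empty_or_nonempty with he | hne'
  · rw [he] at hne
    exact absurd (hne hG) (by simp)
  · obtain ⟨g, hgG, hgmin⟩ := G.exists_min_image r hG
    set k := min (V \ S).card G.card with hk
    have hkpos : 0 < k := lt_min (Finset.card_pos.2 hne') (Finset.card_pos.2 hG)
    have hgtop : g ∈ topk r k G := by
      simp only [topk, Finset.mem_filter]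
      refine ⟨hgG, ?_⟩
      have hemp : (G.filter fun b => r b < r g) = ∅ := by
        apply Finset.filter_eq_empty_iff.2
        intro b hb
        exact not_lt.2 (hgmin b hb)
      rw [hemp]
      simpa using hkpos
    have h1 : f g ∈ V \ S := Finset.filter_subset _ _ (hmem g hgtop)
    have h2 : r (f g) < r g := hlt g hgtop
    have h3 : r g ≤ r g0 := hgmin g0 hg0
    have h4 : r g0 < r (f g) := h _ h1
    omega

/-- for every `n > 0` there is a preference network on `n` individuals
with at least `2 ^ ⌊n/2⌋` members of `C_scomp`. -/
theorem stmt7 (n : ℕ) (hn : 0 < n) :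
    ∃ (V : Finset ℕ) (P : ℕ → ℕ → ℕ), IsProfile V P ∧ V.card = n ∧
      2 ^ (n / 2) ≤ {S : Finset ℕ | CscompMem V P S}.ncard := by
  set m := n / 2 with hm
  have hmn : 2 * m ≤ n := by omega
  set P : ℕ → ℕ → ℕ := fun u v =>
    if u < m then
      (if v = u then 0 else if v = u + m then m + 1 else if m ≤ v then v + 2 else v + 1)
    else v with hP
  refine ⟨Finset.range n, P, ?_, by simp, ?_⟩
  · -- IsProfile
    intro u hu x hx y hy hxy
    simp only [hP] at hxy
    split_ifs at hxy <;> omega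
  · -- cardinality bound
    -- every S = range m ∪ T with T ⊆ Ico m (2*m) is in C_scomp
    have key : ∀ T ⊆ Finset.Ico m (2 * m),
        CscompMem (Finset.range n) P (Finset.range m ∪ T) := by
      intro T hT
      have hSV : Finset.range m ∪ T ⊆ Finset.range n := by
        apply Finset.union_subset
        · exact Finset.range_subset_range.2 (by omega)
        · intro x hx
          have := Finset.mem_Ico.1 (hT hx)
          simp only [Finset.mem_range]
          omega
      have hwm : ∀ w, w ∉ Finset.range m ∪ T → m ≤ w := by
        intro w hw
        by_contra hlt
        exact hw (Finset.mem_union_left _ (Finset.mem_range.2 (by omega)))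
      refine ⟨hSV, ?_, ?_⟩
      · -- strongly group stable
        intro G hGsub hGne
        obtain ⟨s0, hs0S, hs0G⟩ := Finset.exists_of_ssubset hGsub
        by_cases hcase : ∃ x ∈ G, x < m
        · obtain ⟨x, hxG, hxm⟩ := hcase
          refine ⟨s0, Finset.mem_sdiff.2 ⟨hs0S, hs0G⟩, ?_⟩
          apply not_weakPrefers_aux (P s0) hGne hxG
          intro w hw
          rw [Finset.mem_sdiff] at hw
          have hw1 : m ≤ w := hwm w hw.2
          simp only [hP]
          split_ifs <;> omega
        · push_neg at hcase
          obtain ⟨g0, hg0G⟩ := id hGne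
          have hg0m : m ≤ g0 := hcase g0 hg0G
          have hg0S : g0 ∈ Finset.range m ∪ T := hGsub.subset hg0G
          have hg0T : g0 ∈ T := by
            rcases Finset.mem_union.1 hg0S with h' | h'
            · exact absurd (Finset.mem_range.1 h') (by omega)
            · exact h'
          have hg02m : g0 < 2 * m := (Finset.mem_Ico.1 (hT hg0T)).2
          have hsm : g0 - m < m := by omega
          have hsS : g0 - m ∈ Finset.range m ∪ T :=
            Finset.mem_union_left _ (Finset.mem_range.2 hsm)
          have hsG : g0 - m ∉ G := fun hmem => by
            have := hcase _ hmem; omega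
          refine ⟨g0 - m, Finset.mem_sdiff.2 ⟨hsS, hsG⟩, ?_⟩
          apply not_weakPrefers_aux (P (g0 - m)) hGne hg0G
          intro w hw
          rw [Finset.mem_sdiff] at hw
          have hw1 : m ≤ w := hwm w hw.2
          have hwg0 : w ≠ g0 := fun h => hw.2 (h ▸ hg0S)
          have hgeq : g0 = (g0 - m) + m := by omega
          simp only [hP]
          split_ifs <;> omega
      · -- singleton clause
        intro s hs
        rcases Nat.eq_zero_or_pos m with hm0 | hm0
        · exfalso
          have hico : Finset.Ico m (2 * m) = ∅ := by
            apply Finset.Ico_eq_empty; omega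
          rw [hico] at hT
          have hT0 : T = ∅ := Finset.subset_empty.1 hT
          rw [hm0, hT0] at hs
          simp only [Finset.range_zero, Finset.empty_union] at hs
          exact absurd hs.symm (Finset.singleton_ne_empty s)
        · have h0 : (0 : ℕ) ∈ Finset.range m ∪ T :=
            Finset.mem_union_left _ (Finset.mem_range.2 hm0)
          rw [hs, Finset.mem_singleton] at h0
          subst h0
          intro v hv hvs
          simp only [hP]
          split_ifs <;> omega
    -- the family of such sets
    set F : Finset (Finset ℕ) :=
      ((Finset.Ico m (2 * m)).powerset).image (fun T => Finset.range m ∪ T) with hF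
    have hsubT : ∀ T1 T2 : Finset ℕ, T1 ⊆ Finset.Ico m (2 * m) →
        Finset.range m ∪ T1 = Finset.range m ∪ T2 → T1 ⊆ T2 := by
      intro T1 T2 h1 h x hx
      have hx2 : x ∈ Finset.range m ∪ T2 := h ▸ Finset.mem_union_right _ hx
      rcases Finset.mem_union.1 hx2 with h' | h'
      · have := Finset.mem_Ico.1 (h1 hx)
        have := Finset.mem_range.1 h'
        omega
      · exact h'
    have hcard : F.card = 2 ^ m := by
      rw [hF, Finset.card_image_of_injOn, Finset.card_powerset, Nat.card_Ico]
      · congr 1; omega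
      · intro T1 h1 T2 h2 h
        simp only [Finset.coe_powerset, Set.mem_preimage, Set.mem_powerset_iff,
          Finset.coe_subset] at h1 h2
        exact Finset.Subset.antisymm (hsubT T1 T2 h1 h) (hsubT T2 T1 h2 h.symm)
    have hfin : {S : Finset ℕ | CscompMem (Finset.range n) P S}.Finite := by
      apply Set.Finite.subset (Finset.range n).powerset.finite_toSet
      intro S hS
      exact Finset.mem_coe.2 (Finset.mem_powerset.2 hS.1)
    have hsub : ↑F ⊆ {S : Finset ℕ | CscompMem (Finset.range n) P S} := by
      intro S hS
      simp only [hF, Finset.coe_image, Set.mem_image, Finset.coe_powerset,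
        Set.mem_preimage, Set.mem_powerset_iff, Finset.coe_subset] at hS
      obtain ⟨T, hT, rfl⟩ := hS
      exact key T hT
    calc 2 ^ m = F.card := hcard.symm
      _ = (↑F : Set (Finset ℕ)).ncard := (Set.ncard_coe_finset F).symm
      _ ≤ _ := Set.ncard_le_ncard hsub hfin
end

section
/- In the hero/sidekick network with heroes h_1,…,h_m and sidekicks s_1,…,s_m, where π_{h_i}=π_{s_i}=[h_i, h_1,…,h_m (omitting the duplicate h_i), then s_i, then the remaining sidekicks], every set of the form H ∪ U with U ⊆ S is strongly group-stable. -/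
open Finset

variable {α : Type*} [DecidableEq α]

/-- The ranking shared by hero `h_i` (= `i`) and sidekick `s_i` (= `m + i`):
`h_i` first, then the other heroes `0,…,m-1` in index order, then `s_i`, then the
remaining sidekicks `m,…,2m-1` in index order. -/
def exRank (m i t : ℕ) : ℕ :=
  if t = i then 0
  else if t = m + i then m
  else if t < m then (if t < i then t + 1 else t)
  else (if t < m + i then t + 1 else t)


lemma key_not_weak {α : Type*} [DecidableEq α] {r : α → ℕ} {A G : Finset α} (hG : G.Nonempty)
    (h : ∃ g ∈ G, ∀ a ∈ A, r g < r a) : ¬ WeakPrefers r A G := by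
  rintro ⟨hne, f, hinj, hmem, hlt⟩
  obtain ⟨g, hg, hga⟩ := h
  obtain ⟨b, hb, hbmin⟩ := G.exists_min_image r hG
  have hA : A.Nonempty := hne hG
  have hk : 0 < min A.card G.card := lt_min (card_pos.2 hA) (card_pos.2 hG)
  have hbtop : b ∈ topk r (min A.card G.card) G := by
    simp only [topk, mem_filter]
    refine ⟨hb, ?_⟩
    have hemp : (G.filter fun x => r x < r b) = ∅ :=
      filter_eq_empty_iff.2 fun x hx => not_lt.2 (hbmin x hx)
    simp [hemp, hk]
  have hfb : f b ∈ A := (mem_filter.1 (hmem b hbtop)).1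
  have h1 : r (f b) < r b := hlt b hbtop
  have h2 : r b ≤ r g := hbmin g hg
  have h3 : r g < r (f b) := hga _ hfb
  omega

/-- in the hero/sidekick network, every set `H ∪ U` with `U` a set of
sidekicks is strongly group-stable. -/
theorem stmt8 (m : ℕ) (U : Finset ℕ) (hU : U ⊆ (Finset.range m).image (· + m)) :
    StronglyGroupStable (Finset.range (2 * m)) (fun u t => exRank m (u % m) t)
      (Finset.range m ∪ U) := by
  intro G hG hGne
  have hUm : ∀ x ∈ U, ∃ j < m, x = j + m := by
    intro x hx
    obtain ⟨j, hj, hjx⟩ := Finset.mem_image.1 (hU hx)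
    exact ⟨j, Finset.mem_range.1 hj, hjx.symm⟩
  -- m > 0
  obtain ⟨g0, hg0⟩ := id hGne
  have hg0S : g0 ∈ Finset.range m ∪ U := hG.1 hg0
  have hm : 0 < m := by
    rcases Finset.mem_union.1 hg0S with h | h
    · exact Nat.pos_of_ne_zero fun hz => by simp [hz] at h
    · obtain ⟨j, hj, _⟩ := hUm _ h; omega
  -- facts about A = V \ S
  have hAmem : ∀ a ∈ Finset.range (2 * m) \ (Finset.range m ∪ U),
      m ≤ a ∧ a < 2 * m ∧ a ∉ U := by
    intro a ha
    obtain ⟨h1, h2⟩ := Finset.mem_sdiff.1 ha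
    simp only [Finset.mem_union, Finset.mem_range, not_or] at h2
    exact ⟨Nat.le_of_not_lt h2.1, Finset.mem_range.1 h1, h2.2⟩
  rcases Finset.eq_empty_or_nonempty (Finset.range (2 * m) \ (Finset.range m ∪ U))
      with hA | hA
  · obtain ⟨s, hsS, hsG⟩ := Finset.exists_of_ssubset hG
    refine ⟨s, Finset.mem_sdiff.2 ⟨hsS, hsG⟩, ?_⟩
    rintro ⟨hne, -⟩
    have := hne hGne
    rw [hA] at this
    exact Finset.not_nonempty_empty this
  · by_cases hall : Finset.range m ⊆ G
    · -- all heroes in G; witness is a sidekick s = j + m, element g = hero j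
      obtain ⟨s, hsS, hsG⟩ := Finset.exists_of_ssubset hG
      have hsU : s ∈ U := by
        rcases Finset.mem_union.1 hsS with h | h
        · exact absurd (hall h) hsG
        · exact h
      obtain ⟨j, hj, hjs⟩ := hUm _ hsU
      refine ⟨s, Finset.mem_sdiff.2 ⟨hsS, hsG⟩, key_not_weak hGne ⟨j, hall (Finset.mem_range.2 hj), ?_⟩⟩
      intro a ha
      obtain ⟨ha1, ha2, ha3⟩ := hAmem a ha
      have hsm : s % m = j := by rw [hjs, Nat.add_mod_right]; exact Nat.mod_eq_of_lt hj
      have haj : a ≠ j + m := fun h => ha3 (h ▸ hjs ▸ hsU)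
      show exRank m (s % m) j < exRank m (s % m) a
      rw [hsm]
      simp only [exRank]
      split_ifs <;> omega
    · obtain ⟨j, hjm, hjG⟩ := Finset.not_subset.1 hall
      have hjm' : j < m := Finset.mem_range.1 hjm
      have hjS : j ∈ Finset.range m ∪ U := Finset.mem_union_left _ hjm
      by_cases hhero : ∃ t ∈ G, t < m
      · obtain ⟨t, htG, htm⟩ := hhero
        refine ⟨j, Finset.mem_sdiff.2 ⟨hjS, hjG⟩, key_not_weak hGne ⟨t, htG, ?_⟩⟩
        intro a ha
        obtain ⟨ha1, ha2, ha3⟩ := hAmem a ha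
        have hsm : j % m = j := Nat.mod_eq_of_lt hjm'
        have htj : t ≠ j := fun h => hjG (h ▸ htG)
        show exRank m (j % m) t < exRank m (j % m) a
        rw [hsm]
        simp only [exRank]
        split_ifs <;> omega
      · -- no heroes in G: G ⊆ U
        push_neg at hhero
        have hg0U : g0 ∈ U := by
          rcases Finset.mem_union.1 hg0S with h | h
          · exact absurd (Finset.mem_range.1 h) (Nat.not_lt.2 (hhero _ hg0))
          · exact h
        obtain ⟨k, hk, hkg⟩ := hUm _ hg0U
        have hkG : k ∉ G := fun h => absurd (hhero _ h) (Nat.not_le.2 hk)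
        refine ⟨k, Finset.mem_sdiff.2 ⟨Finset.mem_union_left _ (Finset.mem_range.2 hk), hkG⟩,
          key_not_weak hGne ⟨g0, hg0, ?_⟩⟩
        intro a ha
        obtain ⟨ha1, ha2, ha3⟩ := hAmem a ha
        have hsm : k % m = k := Nat.mod_eq_of_lt hk
        have hak : a ≠ k + m := fun h => ha3 (h ▸ hkg ▸ hg0U)
        show exRank m (k % m) g0 < exRank m (k % m) a
        rw [hsm, hkg]
        simp only [exRank]
        split_ifs <;> omega
end

section
/- Every clique of a preference network is strongly group-stable. -/
open Finset

variable {α : Type*} [DecidableEq α]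

/-- every clique is strongly group-stable. -/
theorem stmt13 (V S : Finset α) (P : α → α → ℕ) (hP : IsProfile V P)
    (h : IsClique V P S) : StronglyGroupStable V P S := by
  rintro G hGS hGne
  obtain ⟨s, hsS, hsG⟩ := Finset.exists_of_ssubset hGS
  refine ⟨s, Finset.mem_sdiff.mpr ⟨hsS, hsG⟩, ?_⟩
  rintro ⟨hne, f, hinj, hmem, hlt⟩
  have hAne : (V \ S).Nonempty := hne hGne
  have hk : 1 ≤ min (V \ S).card G.card := le_min hAne.card_pos hGne.card_pos
  obtain ⟨b, hbG, hbmin⟩ := G.exists_min_image (P s) hGne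
  have hbtop : b ∈ topk (P s) (min (V \ S).card G.card) G := by
    simp only [topk, Finset.mem_filter]
    refine ⟨hbG, ?_⟩
    have hemp : (G.filter fun c => P s c < P s b) = ∅ := by
      rw [Finset.filter_eq_empty_iff]
      intro c hc
      exact not_lt.mpr (hbmin c hc)
    rw [hemp]
    simpa using hk
  have h1 := hmem b hbtop
  have h2 := hlt b hbtop
  have hfb : f b ∈ V \ S := Finset.filter_subset _ _ h1
  have hbS : b ∈ S := hGS.subset (Finset.filter_subset _ _ hbtop)
  exact absurd h2 (not_lt.mpr (h.2.2 s hsS b hbS (f b) hfb).le)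
end

section
/- Given S ⊆ V, if there exists u ∈ V−S such that S ∪ {u} ∈ C_harmon(N), then for every v ∈ V−S with v ≠ u, S ∪ {v} ∉ C_harmon(N). (Each set has at most one harmonious one-element extension.) -/
open Finset

variable {α : Type*} [DecidableEq α]

/-- Membership in `C_harmon`: for every member `u` and non-member `v`, strictly more
than half of the members of `S - {u}` prefer `u` to `v`. -/
def CharmonMem (V : Finset α) (P : α → α → ℕ) (S : Finset α) : Prop :=
  S ⊆ V ∧ ∀ u ∈ S, ∀ v ∈ V \ S,
    (S.erase u).card < 2 * ((S.erase u).filter fun s => P s u < P s v).card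

/-- each set has at most one harmonious one-element extension. -/
theorem stmt15 (V S : Finset α) (P : α → α → ℕ) (hP : IsProfile V P)
    (hS : S ⊆ V) (u : α) (hu : u ∈ V \ S) (h : CharmonMem V P (insert u S)) :
    ∀ v ∈ V \ S, v ≠ u → ¬ CharmonMem V P (insert v S) := by
  intro v hv hvu hcon
  simp only [mem_sdiff] at hu hv
  have huS : u ∉ S := hu.2
  have hvS : v ∉ S := hv.2
  have heu : (insert u S).erase u = S := by
    rw [Finset.erase_insert huS]
  have hev : (insert v S).erase v = S := by
    rw [Finset.erase_insert hvS]
  have h1 := h.2 u (mem_insert_self u S) v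
    (by simp [mem_sdiff, hv.1, hvS, hvu])
  have h2 := hcon.2 v (mem_insert_self v S) u
    (by simp [mem_sdiff, hu.1, huS, Ne.symm hvu])
  rw [heu] at h1
  rw [hev] at h2
  set A := S.filter fun s => P s u < P s v with hA
  set B := S.filter fun s => P s v < P s u with hB
  have hdisj : Disjoint A B := by
    rw [Finset.disjoint_filter]
    intro x _ hx1 hx2
    omega
  have hsub : A ∪ B ⊆ S := union_subset (filter_subset _ _) (filter_subset _ _)
  have hcard : A.card + B.card ≤ S.card := by
    rw [← card_union_of_disjoint hdisj]
    exact card_le_card hsub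
  omega
end
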